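/- arXiv:2505.16450 — 2 statements merged into one kernel-verified Lean document; each statement's English description precedes it below -/
import Mathlib

section
/- For 0 < a ≤ 2λ and any C² curve α(t) = (y(t), x(t)) in ℝ × ℝᵈ lying in the hypersurface {xᵢ = e^{a y}} of the Heintze metric g = dy² + Σⱼ e^{-2λⱼ y}dxⱼ² (with λᵢ = λ), one has df(∇_{α'}α') ≥ 0, where f(y,x) = e^{ay} − xᵢ and ∇ is the Levi-Civita connection of g. Explicitly, a e^{ay} ( y'' + Σⱼ λⱼ (xⱼ')² e^{-2λⱼ y} ) − xᵢ'' + 2λ xᵢ' y' ≥ (2aλ − a²) e^{ay} (y')² ≥ 0. -/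
/-!
Along the hypersurface `xᵢ = e^{a y}` one has `xᵢ' = a y' e^{a y}` and
`xᵢ'' = a (y'' + a y'²) e^{a y}`, so the `y''` terms cancel and
`df(∇_{α'}α') = a e^{a y} ∑ⱼ λⱼ (xⱼ')² e^{-2λⱼ y} + a (2λ - a) e^{a y} (y')²`,
a sum of two nonnegative terms when `0 < a ≤ 2λ`.
-/

open Real

lemma hasDerivAt_exp_const_mul_comp {y : ℝ → ℝ} {t : ℝ} (hy : DifferentiableAt ℝ y t) (a : ℝ) :
    HasDerivAt (fun s => exp (a * y s)) (a * deriv y t * exp (a * y t)) t := by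
  convert (hy.hasDerivAt.const_mul a).exp using 1
  ring

lemma deriv_exp_const_mul_comp {y : ℝ → ℝ} (hy : Differentiable ℝ y) (a : ℝ) :
    deriv (fun s => exp (a * y s)) = fun s => a * deriv y s * exp (a * y s) :=
  funext fun s => (hasDerivAt_exp_const_mul_comp (hy s) a).deriv

lemma deriv_deriv_exp_const_mul_comp {y : ℝ → ℝ} (hy : ContDiff ℝ 2 y) (a t : ℝ) :
    deriv (deriv fun s => exp (a * y s)) t =
      a * (deriv (deriv y) t + a * deriv y t ^ 2) * exp (a * y t) := by
  have hy₁ : Differentiable ℝ y := hy.differentiable (by norm_num)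
  have hy₂ : Differentiable ℝ (deriv y) := (hy.iterate_deriv' 1 1).differentiable (by norm_num)
  rw [deriv_exp_const_mul_comp hy₁ a]
  refine ((((hy₂ t).hasDerivAt.const_mul a).mul
    (hasDerivAt_exp_const_mul_comp (hy₁ t) a)).deriv).trans ?_
  ring

theorem convexity_computation_general (d : ℕ) (lam : Fin d → ℝ) (hpos : ∀ j, 0 < lam j)
    (i : Fin d) (a : ℝ) (ha : 0 < a) (ha2 : a ≤ 2 * lam i)
    (y : ℝ → ℝ) (x : ℝ → Fin d → ℝ)
    (hy : ContDiff ℝ 2 y)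
    (hcurve : ∀ t, x t i = Real.exp (a * y t)) (t : ℝ) :
    ((2 * a * lam i - a ^ 2) * Real.exp (a * y t) * (deriv y t) ^ 2 ≤
      a * Real.exp (a * y t) *
          (deriv (deriv y) t +
            ∑ j, lam j * (deriv (fun s => x s j) t) ^ 2 * Real.exp (-2 * lam j * y t))
        - deriv (deriv (fun s => x s i)) t
        + 2 * lam i * deriv (fun s => x s i) t * deriv y t) ∧
    0 ≤ (2 * a * lam i - a ^ 2) * Real.exp (a * y t) * (deriv y t) ^ 2 := by
  have hxi : (fun s => x s i) = fun s => exp (a * y s) := funext hcurve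
  have hsum : 0 ≤ ∑ j, lam j * (deriv (fun s => x s j) t) ^ 2 * exp (-2 * lam j * y t) :=
    Finset.sum_nonneg fun j _ => by have := (hpos j).le; positivity
  have hcoef : 0 ≤ 2 * a * lam i - a ^ 2 := by nlinarith
  rw [hxi, deriv_deriv_exp_const_mul_comp hy,
    deriv_exp_const_mul_comp (hy.differentiable (by norm_num))]
  refine ⟨?_, by positivity⟩
  have hnormal : 0 ≤ a * exp (a * y t) * ∑ j, lam j * (deriv (fun s => x s j) t) ^ 2 *
      exp (-2 * lam j * y t) := by positivity
  linarith

/-- convexity computation. For `0 < a ≤ 2λᵢ` and a C² curve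
`α(t) = (y(t), x(t))` lying in the hypersurface `{xᵢ = e^{a y}}` of the Heintze
metric, one has
`a e^{ay}(y'' + ∑ⱼ λⱼ (xⱼ')² e^{-2λⱼ y}) − xᵢ'' + 2λᵢ xᵢ' y' ≥ (2aλᵢ − a²) e^{ay} (y')² ≥ 0`,
i.e. `df(∇_{α'}α') ≥ 0` for `f(y,x) = e^{ay} − xᵢ`. -/
theorem convexity_computation (d : ℕ) (lam : Fin d → ℝ) (hpos : ∀ j, 0 < lam j)
    (i : Fin d) (a : ℝ) (ha : 0 < a) (ha2 : a ≤ 2 * lam i)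
    (y : ℝ → ℝ) (x : ℝ → Fin d → ℝ)
    (hy : ContDiff ℝ 2 y) (hx : ContDiff ℝ 2 x)
    (hcurve : ∀ t, x t i = Real.exp (a * y t)) (t : ℝ) :
    ((2 * a * lam i - a ^ 2) * Real.exp (a * y t) * (deriv y t) ^ 2 ≤
      a * Real.exp (a * y t) *
          (deriv (deriv y) t +
            ∑ j, lam j * (deriv (fun s => x s j) t) ^ 2 * Real.exp (-2 * lam j * y t))
        - deriv (deriv (fun s => x s i)) t
        + 2 * lam i * deriv (fun s => x s i) t * deriv y t) ∧
    0 ≤ (2 * a * lam i - a ^ 2) * Real.exp (a * y t) * (deriv y t) ^ 2 :=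
  convexity_computation_general d lam hpos i a ha ha2 y x hy hcurve t
end

section
/- Define ρ : M × M → [1, ∞) by ρ((y,x),(y',x')) = 1 + |y − y'| + 2 inf{ t ≥ 0 : Σᵢ e^{-2λᵢ(t + max(y,y'))}(xᵢ − x'ᵢ)² ≤ 1 } on M = ℝ × ℝᵈ with the Heintze metric g = dy² + Σᵢ e^{-2λᵢ y} dxᵢ². Then dist(p,q) ≤ ρ(p,q) for all p, q ∈ M. -/
/-- Length of a differentiable path in the Heintze metric
`g = dy² + ∑ᵢ e^{-2λᵢ y} dxᵢ²`. -/
noncomputable def heintzeLength {d : ℕ} (lam : Fin d → ℝ)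
    (γ : ℝ → ℝ × (Fin d → ℝ)) : ℝ :=
  ∫ t in (0:ℝ)..1, Real.sqrt ((deriv (fun s => (γ s).1) t) ^ 2 +
    ∑ i, Real.exp (-2 * lam i * (γ t).1) * (deriv (fun s => (γ s).2 i) t) ^ 2)

/-- Riemannian distance in the Heintze metric. -/
noncomputable def heintzeDist {d : ℕ} (lam : Fin d → ℝ)
    (p q : ℝ × (Fin d → ℝ)) : ℝ :=
  sInf { L | ∃ γ : ℝ → ℝ × (Fin d → ℝ),
    Differentiable ℝ γ ∧ γ 0 = p ∧ γ 1 = q ∧ L = heintzeLength lam γ }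

/-- The approximate distance
`ρ((y,x),(y',x')) = 1 + |y−y'| + 2 inf{t ≥ 0 : ∑ᵢ e^{-2λᵢ(t+max(y,y'))}(xᵢ−x'ᵢ)² ≤ 1}`. -/
noncomputable def approxRho {d : ℕ} (lam : Fin d → ℝ)
    (p q : ℝ × (Fin d → ℝ)) : ℝ :=
  1 + |p.1 - q.1| + 2 * sInf { t : ℝ | 0 ≤ t ∧
    ∑ i, Real.exp (-2 * lam i * (t + max p.1 q.1)) * (p.2 i - q.2 i) ^ 2 ≤ 1 }

/-!
The distance is bounded by the length of one explicit path: from `p = (y, x)` go straight up to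
height `h = max y y' + t`, where `t` attains the infimum in `ρ`, then move horizontally to the
point above `q`, which costs at most `1` because at height `h` the horizontal displacement has
`g`-length at most `1`, and finally go straight down to `q`. The vertical legs cost `h - y` and
`h - y'`, which add up to `|y - y'| + 2t`. To get a differentiable path, the three legs are run
one after the other, each reparametrised by the smooth step `Real.smoothTransition`.
-/

open Real Filter Set Topology MeasureTheory

lemma Real.sqrt_sq_add_le (u : ℝ) {v : ℝ} (hv : 0 ≤ v) : √(u ^ 2 + v) ≤ |u| + √v := by
  rw [Real.sqrt_le_left (by positivity)]
  nlinarith [Real.sq_sqrt hv, sq_abs u, abs_nonneg u, Real.sqrt_nonneg v]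

lemma intervalIntegral.integral_mono_of_nonneg {f g : ℝ → ℝ} {a b : ℝ} (hab : a ≤ b)
    (hf : 0 ≤ f) (hg : IntervalIntegrable g volume a b) (hfg : ∀ t ∈ Ioc a b, f t ≤ g t) :
    ∫ t in a..b, f t ≤ ∫ t in a..b, g t := by
  rw [intervalIntegral.integral_of_le hab, intervalIntegral.integral_of_le hab]
  exact MeasureTheory.integral_mono_of_nonneg (Eventually.of_forall hf) hg.1
    ((ae_restrict_mem measurableSet_Ioc).mono hfg)

lemma tendsto_sum_exp_mul_atTop {ι : Type*} [Fintype ι] {lam : ι → ℝ} (hpos : ∀ i, 0 < lam i)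
    (m : ℝ) (c : ι → ℝ) :
    Tendsto (fun t => ∑ i, exp (-2 * lam i * (t + m)) * c i) atTop (𝓝 0) := by
  have hterm (i : ι) : Tendsto (fun t => exp (-2 * lam i * (t + m)) * c i) atTop (𝓝 0) := by
    have harg : Tendsto (fun t : ℝ => -2 * lam i * (t + m)) atTop atBot :=
      (tendsto_atTop_add_const_right _ m tendsto_id).const_mul_atTop_of_neg
        (by linarith [hpos i])
    simpa using (tendsto_exp_atBot.comp harg).mul_const (c i)
  simpa using tendsto_finsetSum Finset.univ fun i _ => hterm i

lemma exists_approxRho_eq {d : ℕ} {lam : Fin d → ℝ} (hpos : ∀ i, 0 < lam i)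
    (p q : ℝ × (Fin d → ℝ)) :
    ∃ T, 0 ≤ T ∧
      ∑ i, exp (-2 * lam i * (T + max p.1 q.1)) * (p.2 i - q.2 i) ^ 2 ≤ 1 ∧
      approxRho lam p q = 1 + |p.1 - q.1| + 2 * T := by
  set S : ℝ → ℝ := fun t => ∑ i, exp (-2 * lam i * (t + max p.1 q.1)) * (p.2 i - q.2 i) ^ 2
  have hS : Continuous S := by fun_prop
  have hne : {t : ℝ | 0 ≤ t ∧ S t ≤ 1}.Nonempty :=
    (((tendsto_sum_exp_mul_atTop hpos _ _).eventually_le_const one_pos).and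
      (eventually_ge_atTop 0)).exists.imp fun t ht => ⟨ht.2, ht.1⟩
  have hclosed : IsClosed {t : ℝ | 0 ≤ t ∧ S t ≤ 1} :=
    (isClosed_le continuous_const continuous_id).inter (isClosed_le hS continuous_const)
  obtain ⟨hT0, hT⟩ := hclosed.csInf_mem hne ⟨0, fun t ht => ht.1⟩
  exact ⟨_, hT0, hT, rfl⟩

noncomputable def legStep (k s : ℝ) : ℝ := smoothTransition (3 * s - k)

namespace legStep

variable {k s : ℝ}

lemma eq_zero (hs : s ≤ k / 3) : legStep k s = 0 :=
  smoothTransition.zero_of_nonpos (by linarith)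

lemma eq_one (hs : (k + 1) / 3 ≤ s) : legStep k s = 1 :=
  smoothTransition.one_of_one_le (by linarith)

lemma contDiff {n : ℕ∞} : ContDiff ℝ n (legStep k) :=
  smoothTransition.contDiff.comp (by fun_prop)

lemma differentiable : Differentiable ℝ (legStep k) :=
  contDiff (n := 1).differentiable one_ne_zero

lemma continuous_deriv : Continuous (deriv (legStep k)) :=
  contDiff (n := 1).continuous_deriv le_rfl

lemma deriv_nonneg : 0 ≤ deriv (legStep k) s :=
  (smoothTransition.monotone.comp fun _ _ h => by linarith).deriv_nonneg

lemma mem_Icc_of_deriv_ne_zero (hs : deriv (legStep k) s ≠ 0) :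
    s ∈ Icc (k / 3) ((k + 1) / 3) := by
  by_contra hout
  rcases not_and_or.1 hout with hlt | hgt
  · have : legStep k =ᶠ[𝓝 s] fun _ => 0 :=
      (eventually_lt_nhds (not_le.1 hlt)).mono fun t ht => eq_zero ht.le
    exact hs (by simp [this.deriv_eq])
  · have : legStep k =ᶠ[𝓝 s] fun _ => 1 :=
      (eventually_gt_nhds (not_le.1 hgt)).mono fun t ht => eq_one ht.le
    exact hs (by simp [this.deriv_eq])

lemma integral_deriv (hk0 : 0 ≤ k) (hk2 : k ≤ 2) :
    ∫ s in (0:ℝ)..1, deriv (legStep k) s = 1 := by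
  rw [intervalIntegral.integral_deriv_eq_sub (fun s _ => differentiable s)
    (continuous_deriv.intervalIntegrable 0 1), eq_one (by linarith), eq_zero (by linarith)]
  norm_num

end legStep

section Heintze

variable {d : ℕ}

noncomputable def heintzeSpeed (lam : Fin d → ℝ) (γ : ℝ → ℝ × (Fin d → ℝ)) (t : ℝ) : ℝ :=
  √((deriv (fun s => (γ s).1) t) ^ 2 +
    ∑ i, exp (-2 * lam i * (γ t).1) * (deriv (fun s => (γ s).2 i) t) ^ 2)

lemma heintzeLength_eq_integral_heintzeSpeed (lam : Fin d → ℝ) (γ : ℝ → ℝ × (Fin d → ℝ)) :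
    heintzeLength lam γ = ∫ t in (0:ℝ)..1, heintzeSpeed lam γ t :=
  rfl

lemma heintzeLength_nonneg (lam : Fin d → ℝ) (γ : ℝ → ℝ × (Fin d → ℝ)) :
    0 ≤ heintzeLength lam γ :=
  intervalIntegral.integral_nonneg zero_le_one fun _ _ => sqrt_nonneg _

lemma heintzeDist_le_heintzeLength (lam : Fin d → ℝ) {p q : ℝ × (Fin d → ℝ)}
    {γ : ℝ → ℝ × (Fin d → ℝ)} (hγ : Differentiable ℝ γ) (h0 : γ 0 = p) (h1 : γ 1 = q) :
    heintzeDist lam p q ≤ heintzeLength lam γ :=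
  csInf_le ⟨0, by rintro L ⟨γ', -, -, -, rfl⟩; exact heintzeLength_nonneg lam γ'⟩
    ⟨γ, hγ, h0, h1, rfl⟩

noncomputable def threeLegPath (h : ℝ) (p q : ℝ × (Fin d → ℝ)) (s : ℝ) : ℝ × (Fin d → ℝ) :=
  (p.1 + (h - p.1) * legStep 0 s - (h - q.1) * legStep 2 s,
    fun i => p.2 i + (q.2 i - p.2 i) * legStep 1 s)

namespace threeLegPath

variable (h : ℝ) (p q : ℝ × (Fin d → ℝ))

lemma hasDerivAt_fst (s : ℝ) :
    HasDerivAt (fun s => (threeLegPath h p q s).1)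
      ((h - p.1) * deriv (legStep 0) s - (h - q.1) * deriv (legStep 2) s) s :=
  ((legStep.differentiable s).hasDerivAt.const_mul _ |>.const_add _).sub
    ((legStep.differentiable s).hasDerivAt.const_mul _)

lemma hasDerivAt_snd (i : Fin d) (s : ℝ) :
    HasDerivAt (fun s => (threeLegPath h p q s).2 i) ((q.2 i - p.2 i) * deriv (legStep 1) s) s :=
  ((legStep.differentiable s).hasDerivAt.const_mul _).const_add _

lemma differentiable : Differentiable ℝ (threeLegPath h p q) := fun s =>
  (hasDerivAt_fst h p q s).differentiableAt.prodMk
    (differentiableAt_pi.2 fun i => (hasDerivAt_snd h p q i s).differentiableAt)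

lemma apply_zero : threeLegPath h p q 0 = p := by
  have (k : ℝ) (hk : 0 ≤ k) : legStep k 0 = 0 := legStep.eq_zero (by linarith)
  simp [threeLegPath, this]

lemma apply_one : threeLegPath h p q 1 = q := by
  have (k : ℝ) (hk : k ≤ 2) : legStep k 1 = 1 := legStep.eq_one (by linarith)
  ext <;> simp [threeLegPath, this]

lemma fst_of_mem_Icc {s : ℝ} (hs : s ∈ Icc (1 / 3 : ℝ) (2 / 3)) :
    (threeLegPath h p q s).1 = h := by
  rw [threeLegPath, legStep.eq_one (by linarith [hs.1]), legStep.eq_zero (by linarith [hs.2])]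
  ring

variable {h p q}

lemma heintzeSpeed_le (lam : Fin d → ℝ) (hp : p.1 ≤ h) (hq : q.1 ≤ h)
    (hx : ∑ i, exp (-2 * lam i * h) * (p.2 i - q.2 i) ^ 2 ≤ 1) (s : ℝ) :
    heintzeSpeed lam (threeLegPath h p q) s ≤
      (h - p.1) * deriv (legStep 0) s + deriv (legStep 1) s + (h - q.1) * deriv (legStep 2) s := by
  have hD (k : ℝ) : 0 ≤ deriv (legStep k) s := legStep.deriv_nonneg
  have hvert : |(h - p.1) * deriv (legStep 0) s - (h - q.1) * deriv (legStep 2) s| ≤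
      (h - p.1) * deriv (legStep 0) s + (h - q.1) * deriv (legStep 2) s := by
    have := mul_nonneg (sub_nonneg.2 hp) (hD 0)
    have := mul_nonneg (sub_nonneg.2 hq) (hD 2)
    rw [abs_le]; constructor <;> linarith
  have hsum : ∑ i, exp (-2 * lam i * (threeLegPath h p q s).1) *
      deriv (fun s => (threeLegPath h p q s).2 i) s ^ 2 =
      deriv (legStep 1) s ^ 2 *
        ∑ i, exp (-2 * lam i * (threeLegPath h p q s).1) * (p.2 i - q.2 i) ^ 2 := by
    rw [Finset.mul_sum]
    exact Finset.sum_congr rfl fun i _ => by rw [(hasDerivAt_snd h p q i s).deriv]; ring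
  -- the horizontal leg is only travelled at height `h`
  have hhor : √(deriv (legStep 1) s ^ 2 *
      ∑ i, exp (-2 * lam i * (threeLegPath h p q s).1) * (p.2 i - q.2 i) ^ 2) ≤
      deriv (legStep 1) s := by
    rcases eq_or_ne (deriv (legStep 1) s) 0 with h0 | hne
    · simp [h0]
    · have hs := legStep.mem_Icc_of_deriv_ne_zero hne
      norm_num at hs
      rw [fst_of_mem_Icc h p q hs, sqrt_mul (sq_nonneg _), sqrt_sq (hD 1)]
      exact mul_le_of_le_one_right (hD 1) (sqrt_le_one.2 hx)
  rw [heintzeSpeed, (hasDerivAt_fst h p q s).deriv, hsum]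
  refine (sqrt_sq_add_le _ (by positivity)).trans ?_
  linarith

lemma heintzeLength_le (lam : Fin d → ℝ) (hp : p.1 ≤ h) (hq : q.1 ≤ h)
    (hx : ∑ i, exp (-2 * lam i * h) * (p.2 i - q.2 i) ^ 2 ≤ 1) :
    heintzeLength lam (threeLegPath h p q) ≤ (h - p.1) + 1 + (h - q.1) := by
  have hint (k : ℝ) : IntervalIntegrable (deriv (legStep k)) volume 0 1 :=
    legStep.continuous_deriv.intervalIntegrable 0 1
  rw [heintzeLength_eq_integral_heintzeSpeed]
  refine (intervalIntegral.integral_mono_of_nonneg zero_le_one (fun _ => sqrt_nonneg _)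
    (((hint 0).const_mul _).add (hint 1) |>.add ((hint 2).const_mul _))
    fun s _ => heintzeSpeed_le lam hp hq hx s).trans_eq ?_
  rw [intervalIntegral.integral_add (((hint 0).const_mul _).add (hint 1)) ((hint 2).const_mul _),
    intervalIntegral.integral_add ((hint 0).const_mul _) (hint 1),
    intervalIntegral.integral_const_mul, intervalIntegral.integral_const_mul,
    legStep.integral_deriv le_rfl (by norm_num), legStep.integral_deriv zero_le_one one_le_two,
    legStep.integral_deriv zero_le_two le_rfl]
  ring

end threeLegPath

end Heintze

theorem dist_le_approxRho_general (d : ℕ) (lam : Fin d → ℝ)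
    (hpos : ∀ i, 0 < lam i)
    (p q : ℝ × (Fin d → ℝ)) :
    heintzeDist lam p q ≤ approxRho lam p q := by
  obtain ⟨T, hT0, hT, hrho⟩ := exists_approxRho_eq hpos p q
  have hp : p.1 ≤ T + max p.1 q.1 := by linarith [le_max_left p.1 q.1]
  have hq : q.1 ≤ T + max p.1 q.1 := by linarith [le_max_right p.1 q.1]
  calc heintzeDist lam p q ≤ heintzeLength lam (threeLegPath (T + max p.1 q.1) p q) :=
        heintzeDist_le_heintzeLength lam (threeLegPath.differentiable _ p q)
          (threeLegPath.apply_zero _ p q) (threeLegPath.apply_one _ p q)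
    _ ≤ (T + max p.1 q.1 - p.1) + 1 + (T + max p.1 q.1 - q.1) :=
        threeLegPath.heintzeLength_le lam hp hq hT
    _ = approxRho lam p q := by
        rw [hrho]; linarith [max_sub_min_eq_abs' p.1 q.1, min_add_max p.1 q.1]

/-- `dist(p,q) ≤ ρ(p,q)` for all `p, q`. -/
theorem dist_le_approxRho (d : ℕ) (lam : Fin d → ℝ)
    (hpos : ∀ i, 0 < lam i) (hmono : Monotone lam)
    (p q : ℝ × (Fin d → ℝ)) :
    heintzeDist lam p q ≤ approxRho lam p q :=
  dist_le_approxRho_general d lam hpos p q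
end
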